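/- arXiv:2411.09383 — 4 statements merged into one kernel-verified Lean document; each statement's English description precedes it below -/
import Mathlib

section
/- For any natural numbers a, b, the function (x,y) ↦ (1/(x−y))·(((e^y−1)/y)·x^a y^b − ((e^x−1)/x)·x^b y^a), where (e^t−1)/t is interpreted as the entire function Σ_{n≥0} t^n/(n+1)!, extends to an analytic function on ℝ². -/
/-!
The numerator equals
`y ^ b * phi y * (x ^ a - y ^ a) - y ^ a * phi y * (x ^ b - y ^ b) - x ^ b * y ^ a * (phi x - phi y)`,
so it suffices that the divided differences `(h x - h y) / (x - y)` of `t ^ n` and of `phi` extend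
analytically to `ℝ²`. For an entire power series `∑ cₙ tⁿ` the divided difference is the
two-variable power series `∑ₙ c (n + 1) ∑_{i ≤ n} x ^ i * y ^ (n - i)`, whose degree-`n` part has
norm at most `(n + 1) * ‖c (n + 1)‖`; hence it is entire as well.
-/

noncomputable def phi (t : ℝ) : ℝ := ∑' n : ℕ, t ^ n / (Nat.factorial (n + 1) : ℝ)

open Set Finset FormalMultilinearSeries ContinuousLinearMap

open scoped Nat

section

variable {𝕜 E F : Type*} [NontriviallyNormedField 𝕜] [NormedAddCommGroup E] [NormedSpace 𝕜 E]
  [NormedAddCommGroup F] [NormedSpace 𝕜 F] [CompleteSpace F]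

theorem FormalMultilinearSeries.analyticOnNhd_sum_of_radius_eq_top
    {p : FormalMultilinearSeries 𝕜 E F} (hp : p.radius = ⊤) : AnalyticOnNhd 𝕜 p.sum univ := by
  have h := p.hasFPowerSeriesOnBall (hp ▸ ENNReal.zero_lt_top)
  rw [hp] at h
  simpa using h.analyticOnNhd

end

section DividedDifference

variable {𝕜 : Type*} [NontriviallyNormedField 𝕜]

def HasAnalyticDivDiff (f : 𝕜 → 𝕜) : Prop :=
  ∃ D : 𝕜 × 𝕜 → 𝕜, AnalyticOnNhd 𝕜 D univ ∧ ∀ x y, (x - y) * D (x, y) = f x - f y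

theorem hasAnalyticDivDiff_pow (n : ℕ) : HasAnalyticDivDiff fun x : 𝕜 => x ^ n :=
  ⟨fun p => ∑ i ∈ range n, p.1 ^ i * p.2 ^ (n - 1 - i), fun _ _ =>
    Finset.analyticAt_fun_sum _ fun _ _ => (analyticAt_fst.pow _).mul (analyticAt_snd.pow _),
    fun x y => by rw [mul_comm]; exact geom_sum₂_mul x y n⟩

/-- On the constant family `(x, y)` this takes the value `x ^ i * y ^ (n - i)`. -/
noncomputable def mixedMonomial (n i : ℕ) :
    ContinuousMultilinearMap 𝕜 (fun _ : Fin n => 𝕜 × 𝕜) 𝕜 :=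
  (ContinuousMultilinearMap.mkPiAlgebra 𝕜 (Fin n) 𝕜).compContinuousLinearMap
    fun k => if (k : ℕ) < i then fst 𝕜 𝕜 𝕜 else snd 𝕜 𝕜 𝕜

theorem mixedMonomial_apply_const {n i : ℕ} (hi : i ≤ n) (x y : 𝕜) :
    mixedMonomial n i (fun _ => (x, y)) = x ^ i * y ^ (n - i) := by
  have hfilter : (range n).filter (· < i) = range i := by ext k; simp; omega
  have hcard : ((range n).filter (¬ · < i)).card = n - i := by
    rw [filter_not, hfilter, card_sdiff_of_subset (range_subset_range.2 hi), card_range, card_range]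
  simp only [mixedMonomial, ContinuousMultilinearMap.compContinuousLinearMap_apply,
    ContinuousMultilinearMap.mkPiAlgebra_apply, apply_ite (fun L : 𝕜 × 𝕜 →L[𝕜] 𝕜 => L (x, y)),
    coe_fst', coe_snd']
  rw [Fin.prod_univ_eq_prod_range (fun k => if k < i then x else y), prod_ite, hfilter,
    prod_const, prod_const, card_range, hcard]

theorem norm_mixedMonomial_le (n i : ℕ) : ‖mixedMonomial (𝕜 := 𝕜) n i‖ ≤ 1 := by
  refine (ContinuousMultilinearMap.norm_compContinuousLinearMap_le _ _).trans ?_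
  rw [ContinuousMultilinearMap.norm_mkPiAlgebra, one_mul]
  refine prod_le_one (fun _ _ => norm_nonneg _) fun k _ => ?_
  split
  · exact norm_fst_le 𝕜 𝕜 𝕜
  · exact norm_snd_le 𝕜 𝕜 𝕜

/-- The power series of `(f x - f y) / (x - y)` for `f = ∑ cₙ tⁿ`. -/
noncomputable def divDiffSeries (c : ℕ → 𝕜) : FormalMultilinearSeries 𝕜 (𝕜 × 𝕜) 𝕜 :=
  fun n => c (n + 1) • ∑ i ∈ range (n + 1), mixedMonomial n i

theorem divDiffSeries_apply_const (c : ℕ → 𝕜) (n : ℕ) (x y : 𝕜) :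
    divDiffSeries c n (fun _ => (x, y)) = c (n + 1) * ∑ i ∈ range (n + 1), x ^ i * y ^ (n - i) := by
  simp only [divDiffSeries, _root_.smul_apply, _root_.sum_apply, smul_eq_mul]
  congr 1
  exact sum_congr rfl fun i hi => mixedMonomial_apply_const (Nat.lt_succ_iff.1 (mem_range.1 hi)) x y

theorem norm_divDiffSeries_le (c : ℕ → 𝕜) (n : ℕ) :
    ‖divDiffSeries c n‖ ≤ ‖c (n + 1)‖ * (n + 1) := by
  calc ‖divDiffSeries c n‖ ≤ ‖c (n + 1)‖ * ‖∑ i ∈ range (n + 1), mixedMonomial n i‖ :=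
        ContinuousMultilinearMap.opNorm_smul_le _ _
    _ ≤ ‖c (n + 1)‖ * ∑ _i ∈ range (n + 1), (1 : ℝ) := by
        gcongr; exact norm_sum_le_of_le _ fun i _ => norm_mixedMonomial_le (𝕜 := 𝕜) n i
    _ = ‖c (n + 1)‖ * (n + 1) := by simp

theorem divDiffSeries_radius {c : ℕ → 𝕜} (hc : (ofScalars 𝕜 c).radius = ⊤) :
    (divDiffSeries c).radius = ⊤ := by
  refine radius_eq_top_of_summable_norm _ fun r => ?_
  have hsum : Summable fun n => ‖c (n + 1)‖ * (2 * r + 1 : ℝ) ^ (n + 1) := by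
    have := (radius_eq_top_iff_summable_norm _).1 hc (2 * r + 1)
    simp only [ofScalars_norm] at this
    exact_mod_cast (summable_nat_add_iff 1).2 this
  refine hsum.of_nonneg_of_le (fun n => by positivity) fun n => ?_
  have hpow : (n + 1 : ℝ) * (r : ℝ) ^ n ≤ (2 * r + 1 : ℝ) ^ (n + 1) :=
    calc (n + 1 : ℝ) * (r : ℝ) ^ n ≤ 2 ^ n * (r : ℝ) ^ n := by
          gcongr; exact_mod_cast Nat.lt_two_pow_self
      _ = (2 * r : ℝ) ^ n := (mul_pow _ _ _).symm
      _ ≤ (2 * r + 1 : ℝ) ^ n := by gcongr; linarith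
      _ ≤ (2 * r + 1 : ℝ) ^ (n + 1) := pow_le_pow_right₀ (by linarith [r.2]) n.le_succ
  calc ‖divDiffSeries c n‖ * (r : ℝ) ^ n ≤ ‖c (n + 1)‖ * (n + 1) * (r : ℝ) ^ n := by
        gcongr; exact norm_divDiffSeries_le c n
    _ ≤ ‖c (n + 1)‖ * (2 * r + 1 : ℝ) ^ (n + 1) := by
        rw [mul_assoc]; gcongr

variable [CompleteSpace 𝕜]

theorem sub_mul_divDiffSeries_sum {c : ℕ → 𝕜} (hc : (ofScalars 𝕜 c).radius = ⊤) (x y : 𝕜) :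
    (x - y) * (divDiffSeries c).sum (x, y) = ofScalarsSum c x - ofScalarsSum c y := by
  have hsummable (z : 𝕜) : Summable fun n => c n • z ^ n := by
    simpa only [ofScalars_apply_eq] using (ofScalars 𝕜 c).summable (x := z) (by simp [hc])
  have hterm (n : ℕ) : (x - y) * divDiffSeries c n (fun _ => (x, y)) =
      c (n + 1) • x ^ (n + 1) - c (n + 1) • y ^ (n + 1) := by
    have hgeom := geom_sum₂_mul x y (n + 1)
    simp only [Nat.add_sub_cancel] at hgeom
    rw [divDiffSeries_apply_const, smul_eq_mul, smul_eq_mul]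
    linear_combination c (n + 1) * hgeom
  rw [FormalMultilinearSeries.sum, ← tsum_mul_left, tsum_congr hterm, ofScalarsSum_eq_tsum,
    ← (hsummable x).tsum_sub (hsummable y), ((hsummable x).sub (hsummable y)).tsum_eq_zero_add]
  simp

theorem hasAnalyticDivDiff_ofScalarsSum {c : ℕ → 𝕜} (hc : (ofScalars 𝕜 c).radius = ⊤) :
    HasAnalyticDivDiff (ofScalarsSum (E := 𝕜) c) :=
  ⟨_, analyticOnNhd_sum_of_radius_eq_top (divDiffSeries_radius hc), sub_mul_divDiffSeries_sum hc⟩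

end DividedDifference

theorem ofScalars_phi_radius : (ofScalars ℝ fun n => ((n + 1)! : ℝ)⁻¹).radius = ⊤ := by
  refine radius_eq_top_of_summable_norm _ fun r => ?_
  refine (Real.summable_pow_div_factorial r).of_nonneg_of_le (fun n => by positivity) fun n => ?_
  rw [ofScalars_norm, norm_inv, Real.norm_natCast, inv_mul_eq_div]
  gcongr
  exact n.le_succ

theorem phi_eq_ofScalarsSum : phi = ofScalarsSum fun n => ((n + 1)! : ℝ)⁻¹ := by
  ext t
  rw [phi, ofScalars_sum_eq]
  exact tsum_congr fun n => by rw [smul_eq_mul, inv_mul_eq_div]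

theorem analyticOnNhd_phi : AnalyticOnNhd ℝ phi univ :=
  phi_eq_ofScalarsSum ▸ analyticOnNhd_sum_of_radius_eq_top ofScalars_phi_radius

theorem hasAnalyticDivDiff_phi : HasAnalyticDivDiff phi :=
  phi_eq_ofScalarsSum ▸ hasAnalyticDivDiff_ofScalarsSum ofScalars_phi_radius

theorem analytic_extension (a b : ℕ) :
    ∃ g : ℝ × ℝ → ℝ, AnalyticOnNhd ℝ g Set.univ ∧
      ∀ p : ℝ × ℝ, p.1 ≠ p.2 →
        g p = (1 / (p.1 - p.2)) *
          (phi p.2 * (p.1 ^ a * p.2 ^ b) - phi p.1 * (p.1 ^ b * p.2 ^ a)) := by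
  obtain ⟨Pa, hPa, hPa_eq⟩ := hasAnalyticDivDiff_pow (𝕜 := ℝ) a
  obtain ⟨Pb, hPb, hPb_eq⟩ := hasAnalyticDivDiff_pow (𝕜 := ℝ) b
  obtain ⟨Dphi, hDphi, hDphi_eq⟩ := hasAnalyticDivDiff_phi
  refine ⟨fun p => p.2 ^ b * phi p.2 * Pa p - p.2 ^ a * phi p.2 * Pb p -
    p.1 ^ b * p.2 ^ a * Dphi p, fun p _ => ?_, fun ⟨x, y⟩ hxy => ?_⟩
  · have hphi₂ : AnalyticAt ℝ (fun q : ℝ × ℝ => phi q.2) p :=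
      (analyticOnNhd_phi p.2 trivial).comp analyticAt_snd
    exact ((((analyticAt_snd.pow b).mul hphi₂).mul (hPa p trivial)).sub
      (((analyticAt_snd.pow a).mul hphi₂).mul (hPb p trivial))).sub
      (((analyticAt_fst.pow b).mul (analyticAt_snd.pow a)).mul (hDphi p trivial))
  · rw [one_div, eq_inv_mul_iff_mul_eq₀ (sub_ne_zero.2 hxy)]
    linear_combination y ^ b * phi y * hPa_eq x y - y ^ a * phi y * hPb_eq x y -
      x ^ b * y ^ a * hDphi_eq x y
end

section
/- The function f₂(x,y) = (1/(x−y))·(φ(y)·(x⁴−4x³y+x²y²+6xy³−3y⁴) − φ(x)·(y⁴−4xy³+x²y²+6x³y−3x⁴)), with φ(t) = Σ_{n≥0} t^n/(n+1)!, satisfies f₂(−x+y, −x) = e^{−x} f₂(x,y) for all (x,y) with the relevant denominators nonzero. -/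
noncomputable def f₂ (x y : ℝ) : ℝ :=
  (1 / (x - y)) *
    (phi y * (x ^ 4 - 4 * x ^ 3 * y + x ^ 2 * y ^ 2 + 6 * x * y ^ 3 - 3 * y ^ 4) -
      phi x * (y ^ 4 - 4 * x * y ^ 3 + x ^ 2 * y ^ 2 + 6 * x ^ 3 * y - 3 * x ^ 4))

theorem mul_phi (t : ℝ) : t * phi t = Real.exp t - 1 := by
  have hexp : HasSum (fun n : ℕ => t ^ n / n.factorial) (Real.exp t) := by
    rw [Real.exp_eq_exp_ℝ]
    exact NormedSpace.expSeries_div_hasSum_exp t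
  have htail : HasSum (fun n : ℕ => t * (t ^ n / (n + 1).factorial)) (Real.exp t - 1) := by
    rw [← hasSum_nat_add_iff' 1] at hexp
    simpa [pow_succ, mul_div_assoc', mul_comm] using hexp
  exact htail.tsum_eq ▸ tsum_mul_left.symm

theorem phi_neg (t : ℝ) : phi (-t) = Real.exp (-t) * phi t := by
  rcases eq_or_ne t 0 with rfl | ht
  · simp
  · refine mul_left_cancel₀ (neg_ne_zero.mpr ht) ?_
    rw [mul_phi, mul_left_comm, neg_mul, mul_phi, Real.exp_neg]
    field_simp [Real.exp_ne_zero t]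
    ring

theorem sub_mul_phi_sub (x y : ℝ) :
    (y - x) * phi (y - x) = Real.exp (-x) * (y * phi y - x * phi x) := by
  rw [mul_phi, mul_phi, mul_phi, Real.exp_sub, Real.exp_neg]
  field_simp [Real.exp_ne_zero x]
  ring

theorem f₂_covariance (x y : ℝ) (h : x ≠ y) (hy : y ≠ 0) :
    f₂ (-x + y) (-x) = Real.exp (-x) * f₂ x y := by
  have hyx : y - x ≠ 0 := sub_ne_zero.mpr h.symm
  have hphi : phi (-x + y) = Real.exp (-x) * (y * phi y - x * phi x) / (y - x) := by
    rw [neg_add_eq_sub, eq_div_iff hyx, mul_comm, sub_mul_phi_sub]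
  rw [f₂, f₂, phi_neg, hphi, show -x + y - -x = y by ring]
  field_simp [sub_ne_zero.mpr h]
  ring
end

section
/- Given any function g : Ω̃ → ℝ on Ω̃ = {(x,y) : y ≥ x ≥ 0}, there exists a unique function f₂ : ℝ² → ℝ extending g such that f₂(−x+y, −x) = e^{−x} f₂(x,y) and f₂(x,y) = f₂(y,x) for all x,y ∈ ℝ. -/
noncomputable def Fext (g : ℝ → ℝ → ℝ) (x y : ℝ) : ℝ :=
  if 0 ≤ x then
    (if x ≤ y then g x y
     else if 0 ≤ y then g y x
     else Real.exp y * g (-y) (x - y))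
  else if 0 ≤ y then Real.exp x * g (-x) (y - x)
  else if x ≤ y then Real.exp x * g (y - x) (-x)
  else Real.exp y * g (x - y) (-y)

lemma FextA1 (g : ℝ → ℝ → ℝ) {x y : ℝ} (hx : 0 ≤ x) (hxy : x ≤ y) :
    Fext g x y = g x y := by
  unfold Fext; rw [if_pos hx, if_pos hxy]

lemma FextA2 (g : ℝ → ℝ → ℝ) {x y : ℝ} (hy : 0 ≤ y) (hyx : y ≤ x) :
    Fext g x y = g y x := by
  have hx : 0 ≤ x := le_trans hy hyx
  unfold Fext; rw [if_pos hx]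
  by_cases h : x ≤ y
  · have : x = y := le_antisymm h hyx
    subst this; rw [if_pos le_rfl]
  · rw [if_neg h, if_pos hy]

lemma FextB1 (g : ℝ → ℝ → ℝ) {x y : ℝ} (hx : 0 ≤ x) (hy : y ≤ 0) :
    Fext g x y = Real.exp y * g (-y) (x - y) := by
  unfold Fext; rw [if_pos hx]
  by_cases h : x ≤ y
  · have hx0 : x = 0 := le_antisymm (le_trans h hy) hx
    have hy0 : y = 0 := le_antisymm hy (hx0 ▸ h)
    subst hx0; subst hy0; simp
  · by_cases h0 : 0 ≤ y
    · have hy0 : y = 0 := le_antisymm hy h0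
      subst hy0; rw [if_neg h, if_pos le_rfl]; simp
    · rw [if_neg h, if_neg h0]

lemma FextB2 (g : ℝ → ℝ → ℝ) {x y : ℝ} (hx : x ≤ 0) (hy : 0 ≤ y) :
    Fext g x y = Real.exp x * g (-x) (y - x) := by
  unfold Fext
  by_cases h : 0 ≤ x
  · have hx0 : x = 0 := le_antisymm hx h
    subst hx0; rw [if_pos le_rfl, if_pos hy]; simp
  · rw [if_neg h, if_pos hy]

lemma FextC1 (g : ℝ → ℝ → ℝ) {x y : ℝ} (hxy : x ≤ y) (hy : y ≤ 0) :
    Fext g x y = Real.exp x * g (y - x) (-x) := by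
  unfold Fext
  by_cases h : 0 ≤ x
  · have hx0 : x = 0 := le_antisymm (le_trans hxy hy) h
    have hy0 : y = 0 := le_antisymm hy (hx0 ▸ hxy)
    subst hx0; subst hy0; simp
  · rw [if_neg h]
    by_cases h0 : 0 ≤ y
    · have hy0 : y = 0 := le_antisymm hy h0
      subst hy0; rw [if_pos h0]; rw [zero_sub]
    · rw [if_neg h0, if_pos hxy]

lemma FextC2 (g : ℝ → ℝ → ℝ) {x y : ℝ} (hyx : y ≤ x) (hx : x ≤ 0) :
    Fext g x y = Real.exp y * g (x - y) (-y) := by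
  unfold Fext
  by_cases h : 0 ≤ x
  · have hx0 : x = 0 := le_antisymm hx h
    subst hx0
    rw [if_pos le_rfl]
    by_cases hxy : (0:ℝ) ≤ y
    · have hy0 : y = 0 := le_antisymm hyx hxy
      subst hy0; rw [if_pos le_rfl]; simp
    · rw [if_neg (fun hh => hxy hh), if_neg hxy, zero_sub]
  · rw [if_neg h]
    have hny : ¬ (0 : ℝ) ≤ y := fun h0 => h (le_trans h0 hyx)
    rw [if_neg hny]
    by_cases hxy : x ≤ y
    · have : x = y := le_antisymm hxy hyx
      subst this; rw [if_pos le_rfl]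
    · rw [if_neg hxy]

theorem unique_extension_symm_cov (g : ℝ → ℝ → ℝ) :
    ∃! f₂ : ℝ → ℝ → ℝ,
      (∀ x y : ℝ, 0 ≤ x → x ≤ y → f₂ x y = g x y) ∧
      (∀ x y : ℝ, f₂ (-x + y) (-x) = Real.exp (-x) * f₂ x y) ∧
      (∀ x y : ℝ, f₂ x y = f₂ y x) := by
  refine ⟨Fext g, ⟨?_, ?_, ?_⟩, ?_⟩
  · intro x y hx hxy; exact FextA1 g hx hxy
  · -- covariance
    intro x y
    rcases le_total 0 x with hx | hx <;> rcases le_total 0 y with hy | hy <;>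
      rcases le_total x y with hxy | hxy
    · -- A1
      rw [FextB1 g (by linarith : (0:ℝ) ≤ -x + y) (by linarith : -x ≤ 0),
          FextA1 g hx hxy, neg_neg, show (-x + y) - -x = y by ring]
    · -- A2
      rw [FextC2 g (by linarith : -x ≤ -x + y) (by linarith : -x + y ≤ 0),
          FextA2 g hy hxy, show (-x + y) - -x = y by ring, neg_neg]
    · -- 0 ≤ x, y ≤ 0, x ≤ y : x = y = 0 essentially, handled as B1
      rw [FextC1 g (by linarith : -x + y ≤ -x) (by linarith : -x ≤ 0),
          FextB1 g hx hy, show -x - (-x + y) = -y by ring,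
          show -(-x + y) = x - y by ring, Real.exp_add]
      ring
    · -- B1
      rw [FextC1 g (by linarith : -x + y ≤ -x) (by linarith : -x ≤ 0),
          FextB1 g hx hy, show -x - (-x + y) = -y by ring,
          show -(-x + y) = x - y by ring, Real.exp_add]
      ring
    · -- B2
      rw [FextA2 g (by linarith : (0:ℝ) ≤ -x) (by linarith : -x ≤ -x + y),
          FextB2 g hx hy, show (-x:ℝ) + y = y - x by ring,
          ← mul_assoc, ← Real.exp_add, show -x + x = 0 by ring, Real.exp_zero, one_mul]
    · -- x ≤ 0, 0 ≤ y impossible with y ≤ x unless equal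
      rw [FextA2 g (by linarith : (0:ℝ) ≤ -x) (by linarith : -x ≤ -x + y),
          FextB2 g hx hy, show (-x:ℝ) + y = y - x by ring,
          ← mul_assoc, ← Real.exp_add, show -x + x = 0 by ring, Real.exp_zero, one_mul]
    · -- C1
      rw [FextA1 g (by linarith : (0:ℝ) ≤ -x + y) (by linarith : -x + y ≤ -x),
          FextC1 g hxy hy, ← mul_assoc, ← Real.exp_add, show -x + x = 0 by ring,
          Real.exp_zero, one_mul, show -x + y = y - x by ring]
    · -- C2
      rw [FextB2 g (by linarith : -x + y ≤ 0) (by linarith : (0:ℝ) ≤ -x),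
          FextC2 g hxy hx, show -(-x + y) = x - y by ring,
          show -x - (-x + y) = -y by ring, Real.exp_add]
      ring
  · -- symmetry
    intro x y
    rcases le_total 0 x with hx | hx <;> rcases le_total 0 y with hy | hy <;>
      rcases le_total x y with hxy | hxy
    · rw [FextA1 g hx hxy, FextA2 g hx hxy]
    · rw [FextA2 g hy hxy, FextA1 g hy hxy]
    · have hy0 : y = 0 := le_antisymm hy (le_trans hx hxy)
      subst hy0
      rw [FextA1 g hx hxy, FextA2 g hx hxy]
    · rw [FextB1 g hx hy, FextB2 g hy hx]
    · rw [FextB2 g hx hy, FextB1 g hy hx]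
    · have hx0 : x = 0 := le_antisymm hx (le_trans hy hxy)
      subst hx0
      rw [FextB2 g le_rfl hy, FextB1 g hy le_rfl]
    · rw [FextC1 g hxy hy, FextC2 g hxy hy]
    · rw [FextC2 g hxy hx, FextC1 g hxy hx]
  · -- uniqueness
    intro f ⟨h1, h2, h3⟩
    have key : ∀ x y : ℝ, 0 ≤ x → y ≤ 0 → f x y = Real.exp y * g (-y) (x - y) := by
      intro x y hx hy
      have h := h2 (-y) (x - y)
      rw [show -(-y) + (x - y) = x by ring, neg_neg] at h
      rw [h, h1 (-y) (x - y) (by linarith) (by linarith)]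
    funext x y
    rcases le_total 0 x with hx | hx <;> rcases le_total 0 y with hy | hy <;>
      rcases le_total x y with hxy | hxy
    · rw [FextA1 g hx hxy, h1 x y hx hxy]
    · rw [FextA2 g hy hxy, h3, h1 y x hy hxy]
    · rw [FextB1 g hx hy, key x y hx hy]
    · rw [FextB1 g hx hy, key x y hx hy]
    · rw [FextB2 g hx hy, h3, key y x hy hx]
    · rw [FextB2 g hx hy, h3, key y x hy hx]
    · -- C1 : x ≤ y ≤ 0
      have h := h2 (-y) (x - y)
      rw [show -(-y) + (x - y) = x by ring, neg_neg] at h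
      rw [FextC1 g hxy hy, h, key (-y) (x - y) (by linarith) (by linarith),
          show -(x - y) = y - x by ring, show -y - (x - y) = -x by ring,
          ← mul_assoc, ← Real.exp_add, show y + (x - y) = x by ring]
    · -- C2 : y ≤ x ≤ 0
      have h := h2 (-x) (y - x)
      rw [show -(-x) + (y - x) = y by ring, neg_neg] at h
      rw [FextC2 g hxy hx, h3, h, key (-x) (y - x) (by linarith) (by linarith),
          show -(y - x) = x - y by ring, show -x - (y - x) = -y by ring,
          ← mul_assoc, ← Real.exp_add, show x + (y - x) = y by ring]
end

section
/- Let Ω̃₂ = {(τs, s) : 1 ≤ s < τ} ∪ {(x,y) : 0 ≤ x ≤ y}, where τ = (√5+1)/2. Given any function ρ̃ : Ω̃₂ → ℝ, there exists a unique function ρ : [0,∞)² → ℝ extending ρ̃ and satisfying (2x+y)ρ(x,y) = (x+y)ρ(x,x+y) + x·ρ(x+y,x) for all x,y ≥ 0. -/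
/-!
Read at `(y, x - y)`, the equation says `y ρ(x, y) = (x + y) ρ(y, x - y) - x ρ(y, x)`: for
`0 < y < x` it gives `ρ(x, y)` from `ρ(y, x)`, a value on `Ω̃₂`, and from `ρ` at the Euclid step
`(y, x - y)`. Off the line `x = τ y` this step multiplies `x - τ y` by `-τ` while `y` decreases, so
every orbit lands in `{x ≤ y}`. On the line the step divides by `τ`, which brings `y ≥ τ` down to
the segment `1 ≤ y < τ`; points with `y < 1`, and those with `y = 0`, are solved for in the
equation at the point itself, which involves `ρ(x + y, x)` higher up the line. Every instance of
the equation is used for exactly one point, so recursion on the number of steps needed to reach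
`Ω̃₂` builds the solution, and the same induction shows that the difference of two solutions
vanishes.
-/

noncomputable def τ : ℝ := (Real.sqrt 5 + 1) / 2

def Omega2 : Set (ℝ × ℝ) :=
  {p | ∃ s : ℝ, 1 ≤ s ∧ s < τ ∧ p = (τ * s, s)} ∪ {p | 0 ≤ p.1 ∧ p.1 ≤ p.2}

namespace Function

variable {α : Type*} (f : α → α) (s : Set α)

abbrev Reaches (a : α) : Prop := ∃ n, f^[n] a ∈ s

open Classical in
noncomputable def hitTime (a : α) : ℕ :=
  if h : Reaches f s a then Nat.find h else 0

variable {f s} {a : α}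

theorem reaches_of_mem (h : a ∈ s) : Reaches f s a := ⟨0, h⟩

theorem Reaches.of_apply (h : Reaches f s (f a)) : Reaches f s a :=
  let ⟨n, hn⟩ := h
  ⟨n + 1, by rwa [iterate_succ_apply]⟩

theorem hitTime_eq_zero_of_mem (h : a ∈ s) : hitTime f s a = 0 := by
  classical
  rw [hitTime, dif_pos (reaches_of_mem h)]
  exact (Nat.find_eq_zero _).2 h

theorem hitTime_apply_lt (h : Reaches f s a) (ha : a ∉ s) :
    hitTime f s (f a) < hitTime f s a := by
  classical
  have hspec := Nat.find_spec h
  have hpos : Nat.find h ≠ 0 := fun h0 ↦ ha (by rwa [h0] at hspec)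
  have hfa : f^[Nat.find h - 1] (f a) ∈ s := by
    rwa [← iterate_succ_apply, Nat.succ_eq_add_one, Nat.sub_one_add_one hpos]
  rw [hitTime, hitTime, dif_pos h, dif_pos ⟨_, hfa⟩]
  exact (Nat.find_min' _ hfa).trans_lt (Nat.pred_lt hpos)

theorem hitTime_lt_of_mem {b : α} (h : Reaches f s a) (ha : a ∉ s) (hb : b ∈ s) :
    hitTime f s b < hitTime f s a := by
  rw [hitTime_eq_zero_of_mem hb]
  exact (Nat.zero_le _).trans_lt (hitTime_apply_lt h ha)

theorem Reaches.induction {P : α → Prop} (hs : ∀ a ∈ s, P a) (hf : ∀ a ∉ s, P (f a) → P a) :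
    Reaches f s a → P a := by
  rintro ⟨n, hn⟩
  induction n generalizing a with
  | zero => exact hs a hn
  | succ n ih =>
    by_cases ha : a ∈ s
    · exact hs a ha
    · exact hf a ha (ih (by rwa [← iterate_succ_apply]))

end Function

theorem tau_eq_goldenRatio : τ = Real.goldenRatio := by
  rw [τ, Real.goldenRatio, add_comm]

theorem tau_sq : τ ^ 2 = τ + 1 := tau_eq_goldenRatio ▸ Real.goldenRatio_sq

theorem one_lt_tau : 1 < τ := tau_eq_goldenRatio ▸ Real.one_lt_goldenRatio

theorem tau_lt_two : τ < 2 := tau_eq_goldenRatio ▸ Real.goldenRatio_lt_two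

theorem tau_mul_tau_sub_one : τ * (τ - 1) = 1 := by linear_combination tau_sq

theorem add_eq_tau_mul_iff {x y : ℝ} : x + y = τ * x ↔ x = τ * y :=
  ⟨fun h ↦ by linear_combination -τ * h - x * tau_sq,
    fun h ↦ by linear_combination (1 - τ) * h - y * tau_sq⟩

theorem mem_omega2_iff {x y : ℝ} :
    (x, y) ∈ Omega2 ↔ (x = τ * y ∧ 1 ≤ y ∧ y < τ) ∨ (0 ≤ x ∧ x ≤ y) := by
  simp only [Omega2, Set.mem_union, Set.mem_ofPred_eq, Prod.mk.injEq]
  constructor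
  · rintro (⟨s, h1, h2, rfl, rfl⟩ | h)
    exacts [Or.inl ⟨rfl, h1, h2⟩, Or.inr h]
  · rintro (⟨rfl, h1, h2⟩ | h)
    exacts [Or.inl ⟨y, h1, h2, rfl, rfl⟩, Or.inr h]

namespace Omega2

open Function

def StepsUp (p : ℝ × ℝ) : Prop := p.2 = 0 ∨ (p.1 = τ * p.2 ∧ p.2 < 1)

open Classical in
noncomputable def step (p : ℝ × ℝ) : ℝ × ℝ :=
  if StepsUp p then (p.1 + p.2, p.1) else (p.2, p.1 - p.2)

theorem step_of_stepsUp {p : ℝ × ℝ} (h : StepsUp p) : step p = (p.1 + p.2, p.1) := if_pos h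

theorem step_of_not_stepsUp {p : ℝ × ℝ} (h : ¬StepsUp p) : step p = (p.2, p.1 - p.2) := if_neg h

theorem step_of_ne {x y : ℝ} (hy : y ≠ 0) (hline : x ≠ τ * y) : step (x, y) = (y, x - y) :=
  step_of_not_stepsUp fun h ↦ h.elim hy fun h ↦ hline h.1

theorem reaches_of_lt_pow_mul_abs (n : ℕ) {x y : ℝ} (hy : 0 < y) (hyx : y < x)
    (hn : y < τ ^ n * |x - τ * y|) : Reaches step Omega2 (x, y) := by
  have hline : x ≠ τ * y := by
    rintro rfl
    simp only [sub_self, abs_zero, mul_zero] at hn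
    linarith
  refine Reaches.of_apply ?_
  rw [step_of_ne hy.ne' hline]
  rcases le_or_gt y (x - y) with hle | hlt
  · exact reaches_of_mem (mem_omega2_iff.2 (Or.inr ⟨hy.le, hle⟩))
  cases n with
  | zero =>
    rw [pow_zero, one_mul, lt_abs] at hn
    rcases hn with hn | hn <;> nlinarith [one_lt_tau, tau_lt_two]
  | succ n =>
    refine reaches_of_lt_pow_mul_abs n (by linarith) hlt ?_
    have hdist : y - τ * (x - y) = -τ * (x - τ * y) := by linear_combination -y * tau_sq
    rw [hdist, abs_mul, abs_neg, abs_of_pos (by linarith [one_lt_tau]), ← mul_assoc, ← pow_succ]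
    linarith

theorem reaches_tau_mul_of_one_le (n : ℕ) {s : ℝ} (h1 : 1 ≤ s) (hn : s < τ ^ n) :
    Reaches step Omega2 (τ * s, s) := by
  rcases lt_or_ge s τ with hs | hs
  · exact reaches_of_mem (mem_omega2_iff.2 (Or.inl ⟨rfl, h1, hs⟩))
  cases n with
  | zero => rw [pow_zero] at hn; linarith
  | succ n =>
    have hstep : step (τ * s, s) = (τ * ((τ - 1) * s), (τ - 1) * s) := by
      rw [step_of_not_stepsUp (by rintro (h | ⟨-, h⟩) <;> linarith [one_lt_tau]), Prod.mk.injEq]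
      exact ⟨by linear_combination (-s) * tau_mul_tau_sub_one, by ring⟩
    refine Reaches.of_apply (hstep ▸ reaches_tau_mul_of_one_le n ?_ ?_)
    · calc 1 = (τ - 1) * τ := by linear_combination -tau_mul_tau_sub_one
        _ ≤ (τ - 1) * s := by gcongr; linarith [one_lt_tau]
    · refine lt_of_mul_lt_mul_left ?_ (by linarith [one_lt_tau] : 0 ≤ τ)
      rwa [← mul_assoc, tau_mul_tau_sub_one, one_mul, ← pow_succ']

theorem reaches_tau_mul_of_lt_tau (n : ℕ) {s : ℝ} (hs : s < τ) (hn : 1 < τ ^ n * s) :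
    Reaches step Omega2 (τ * s, s) := by
  rcases le_or_gt 1 s with h1 | h1
  · exact reaches_of_mem (mem_omega2_iff.2 (Or.inl ⟨rfl, h1, hs⟩))
  cases n with
  | zero => rw [pow_zero, one_mul] at hn; linarith
  | succ n =>
    have hstep : step (τ * s, s) = (τ * (τ * s), τ * s) := by
      rw [step_of_stepsUp (Or.inr ⟨rfl, h1⟩), Prod.mk.injEq]
      exact ⟨by linear_combination (-s) * tau_sq, rfl⟩
    refine Reaches.of_apply (hstep ▸ reaches_tau_mul_of_lt_tau n ?_ ?_)
    · nlinarith [one_lt_tau]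
    · rwa [← mul_assoc, ← pow_succ]

theorem reaches_tau_mul {s : ℝ} (hs : 0 < s) : Reaches step Omega2 (τ * s, s) := by
  rcases le_or_gt 1 s with h1 | h1
  · obtain ⟨n, hn⟩ := pow_unbounded_of_one_lt s one_lt_tau
    exact reaches_tau_mul_of_one_le n h1 hn
  · obtain ⟨n, hn⟩ := pow_unbounded_of_one_lt s⁻¹ one_lt_tau
    exact reaches_tau_mul_of_lt_tau n (by linarith [one_lt_tau]) ((inv_lt_iff_one_lt_mul₀ hs).1 hn)

theorem reaches_of_nonneg {x y : ℝ} (hx : 0 ≤ x) (hy : 0 ≤ y) : Reaches step Omega2 (x, y) := by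
  rcases le_or_gt x y with hxy | hyx
  · exact reaches_of_mem (mem_omega2_iff.2 (Or.inr ⟨hx, hxy⟩))
  rcases hy.eq_or_lt with rfl | hy
  · refine Reaches.of_apply ?_
    rw [step_of_stepsUp (Or.inl rfl)]
    exact reaches_of_mem (mem_omega2_iff.2 (Or.inr ⟨by simpa using hx, by simp⟩))
  by_cases hline : x = τ * y
  · exact hline ▸ reaches_tau_mul hy
  obtain ⟨n, hn⟩ := pow_unbounded_of_one_lt (y / |x - τ * y|) one_lt_tau
  exact reaches_of_lt_pow_mul_abs n hy hyx
    ((div_lt_iff₀ (abs_pos.2 (sub_ne_zero.2 hline))).1 hn)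

theorem lt_of_notMem {x y : ℝ} (hx : 0 ≤ x) (h : (x, y) ∉ Omega2) : y < x :=
  not_le.1 fun hle ↦ h (mem_omega2_iff.2 (Or.inr ⟨hx, hle⟩))

theorem notMem_and_stepsUp_of_add {x y : ℝ} (hx : 0 < x) (hy : 0 ≤ y)
    (h : (x + y, x) ∈ Omega2 ∨ StepsUp (x + y, x)) : (x, y) ∉ Omega2 ∧ StepsUp (x, y) := by
  simp only [mem_omega2_iff, StepsUp, add_eq_tau_mul_iff] at h ⊢
  have key : y = 0 ∨ (x = τ * y ∧ 0 < y ∧ y < 1) := by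
    rcases h with (⟨hl, -, h2⟩ | ⟨-, h2⟩) | (h0 | ⟨hl, h1⟩)
    · have : 0 < y := by nlinarith [one_lt_tau]
      exact Or.inr ⟨hl, this, by nlinarith⟩
    · exact Or.inl (by linarith)
    · exact absurd h0 hx.ne'
    · have : 0 < y := by nlinarith [one_lt_tau]
      exact Or.inr ⟨hl, this, by nlinarith [one_lt_tau]⟩
  rcases key with rfl | ⟨hl, hy0, hy1⟩
  · exact ⟨by rintro (⟨h, -⟩ | ⟨-, h⟩) <;> linarith, Or.inl rfl⟩
  · exact ⟨by rintro (⟨-, h, -⟩ | ⟨-, h⟩) <;> nlinarith [one_lt_tau], Or.inr ⟨hl, hy1⟩⟩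

def SatisfiesFE (ρ : ℝ → ℝ → ℝ) : Prop :=
  ∀ x y : ℝ, 0 ≤ x → 0 ≤ y → (2 * x + y) * ρ x y = (x + y) * ρ x (x + y) + x * ρ (x + y) x

open Classical in
noncomputable def rho (ρ₀ : Omega2 → ℝ) (x y : ℝ) : ℝ :=
  if h : (x, y) ∈ Omega2 then ρ₀ ⟨(x, y), h⟩
  else if 0 ≤ x ∧ 0 ≤ y then
    if hu : StepsUp (x, y) then
      ((x + y) * rho ρ₀ x (x + y) + x * rho ρ₀ (x + y) x) / (2 * x + y)
    else ((x + y) * rho ρ₀ y (x - y) - x * rho ρ₀ y x) / y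
  else 0
termination_by hitTime step Omega2 (x, y)
decreasing_by
  all_goals obtain ⟨hx, hy⟩ : 0 ≤ x ∧ 0 ≤ y := ‹_›
  · exact hitTime_lt_of_mem (reaches_of_nonneg hx hy) h (mem_omega2_iff.2 (Or.inr ⟨hx, by linarith⟩))
  · exact step_of_stepsUp hu ▸ hitTime_apply_lt (reaches_of_nonneg hx hy) h
  · exact step_of_not_stepsUp hu ▸ hitTime_apply_lt (reaches_of_nonneg hx hy) h
  · exact hitTime_lt_of_mem (reaches_of_nonneg hx hy) h
      (mem_omega2_iff.2 (Or.inr ⟨hy, (lt_of_notMem hx h).le⟩))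

variable {ρ₀ : Omega2 → ℝ} {x y : ℝ}

theorem rho_of_mem (h : (x, y) ∈ Omega2) : rho ρ₀ x y = ρ₀ ⟨(x, y), h⟩ := by
  rw [rho, dif_pos h]

theorem rho_of_stepsUp (hx : 0 ≤ x) (hy : 0 ≤ y) (h : (x, y) ∉ Omega2) (hu : StepsUp (x, y)) :
    (2 * x + y) * rho ρ₀ x y = (x + y) * rho ρ₀ x (x + y) + x * rho ρ₀ (x + y) x := by
  have hpos : 0 < 2 * x + y := by linarith [lt_of_notMem hx h]
  rw [rho, dif_neg h, if_pos ⟨hx, hy⟩, dif_pos hu, mul_div_cancel₀ _ hpos.ne']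

theorem rho_of_not_stepsUp (hx : 0 ≤ x) (hy : 0 ≤ y) (h : (x, y) ∉ Omega2)
    (hu : ¬StepsUp (x, y)) :
    y * rho ρ₀ x y = (x + y) * rho ρ₀ y (x - y) - x * rho ρ₀ y x := by
  have hy0 : y ≠ 0 := fun h0 ↦ hu (Or.inl h0)
  rw [rho, dif_neg h, if_pos ⟨hx, hy⟩, dif_neg hu, mul_div_cancel₀ _ hy0]

theorem satisfiesFE_rho (ρ₀ : Omega2 → ℝ) : SatisfiesFE (rho ρ₀) := by
  intro x y hx hy
  rcases hx.eq_or_lt with rfl | hx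
  · simp
  -- the equation at `(x, y)` defines `rho` either at `(x, y)` or at `(x + y, x)`
  by_cases hparent : (x + y, x) ∈ Omega2 ∨ StepsUp (x + y, x)
  · obtain ⟨h, hu⟩ := notMem_and_stepsUp_of_add hx hy hparent
    exact rho_of_stepsUp hx.le hy h hu
  · obtain ⟨h, hu⟩ := not_or.1 hparent
    have := rho_of_not_stepsUp (ρ₀ := ρ₀) (by linarith) hx.le h hu
    rw [add_sub_cancel_left] at this
    linarith

theorem eq_zero_of_satisfiesFE {δ : ℝ → ℝ → ℝ} (h₀ : ∀ p ∈ Omega2, δ p.1 p.2 = 0)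
    (hδ : SatisfiesFE δ) (hx : 0 ≤ x) (hy : 0 ≤ y) : δ x y = 0 := by
  refine (reaches_of_nonneg hx hy).induction (P := fun p ↦ 0 ≤ p.1 → 0 ≤ p.2 → δ p.1 p.2 = 0)
    (fun p hp _ _ ↦ h₀ p hp) ?_ hx hy
  rintro ⟨x, y⟩ h ih hx hy
  have hyx := lt_of_notMem hx h
  by_cases hu : StepsUp (x, y)
  · rw [step_of_stepsUp hu] at ih
    have hfe := hδ x y hx hy
    rw [h₀ (x, x + y) (mem_omega2_iff.2 (Or.inr ⟨hx, by linarith⟩)), ih (by linarith) hx] at hfe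
    exact (mul_eq_zero.1 (by linarith : (2 * x + y) * δ x y = 0)).resolve_left (by linarith)
  · rw [step_of_not_stepsUp hu] at ih
    have hfe := hδ y (x - y) hy (by linarith)
    rw [ih hy (by linarith), add_sub_cancel, h₀ (y, x) (mem_omega2_iff.2 (Or.inr ⟨hy, hyx.le⟩))]
      at hfe
    exact (mul_eq_zero.1 (by linarith : y * δ x y = 0)).resolve_left fun h0 ↦ hu (Or.inl h0)

end Omega2

theorem unique_extension_rho (ρ₀ : Omega2 → ℝ) :
    (∃ ρ : ℝ → ℝ → ℝ,
      (∀ (p : ℝ × ℝ) (hp : p ∈ Omega2), ρ p.1 p.2 = ρ₀ ⟨p, hp⟩) ∧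
      (∀ x y : ℝ, 0 ≤ x → 0 ≤ y →
        (2 * x + y) * ρ x y = (x + y) * ρ x (x + y) + x * ρ (x + y) x)) ∧
    (∀ ρ ρ' : ℝ → ℝ → ℝ,
      ((∀ (p : ℝ × ℝ) (hp : p ∈ Omega2), ρ p.1 p.2 = ρ₀ ⟨p, hp⟩) ∧
        (∀ x y : ℝ, 0 ≤ x → 0 ≤ y →
          (2 * x + y) * ρ x y = (x + y) * ρ x (x + y) + x * ρ (x + y) x)) →
      ((∀ (p : ℝ × ℝ) (hp : p ∈ Omega2), ρ' p.1 p.2 = ρ₀ ⟨p, hp⟩) ∧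
        (∀ x y : ℝ, 0 ≤ x → 0 ≤ y →
          (2 * x + y) * ρ' x y = (x + y) * ρ' x (x + y) + x * ρ' (x + y) x)) →
      ∀ x y : ℝ, 0 ≤ x → 0 ≤ y → ρ x y = ρ' x y) := by
  refine ⟨⟨Omega2.rho ρ₀, fun p hp ↦ Omega2.rho_of_mem hp, Omega2.satisfiesFE_rho ρ₀⟩, ?_⟩
  rintro ρ ρ' ⟨hext, hfe⟩ ⟨hext', hfe'⟩ x y hx hy
  have hδ : Omega2.SatisfiesFE fun a b ↦ ρ a b - ρ' a b := fun a b ha hb ↦ by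
    linear_combination hfe a b ha hb - hfe' a b ha hb
  refine sub_eq_zero.1 (Omega2.eq_zero_of_satisfiesFE (δ := fun a b ↦ ρ a b - ρ' a b) ?_ hδ hx hy)
  exact fun p hp ↦ by rw [hext p hp, hext' p hp, sub_self]
end
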